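/- For every integer m ≥ 0 and every real number z with z > α^{2m}, where α = (1 + √5)/2, the series ∑_{n=0}^∞ ((−1)^n/(2n+1)) · L_{2m(2n+1)}/z^{2n+1} converges and equals arctan(L_{2m}·z / (z² − 1)). -/

import Mathlib

/-- Lucas numbers: `L 0 = 2`, `L 1 = 1`, `L (n+2) = L (n+1) + L n`. -/
def lucasNum : ℕ → ℕ
  | 0 => 2
  | 1 => 1
  | n + 2 => lucasNum (n + 1) + lucasNum n

noncomputable def lucasAlpha : ℝ := (1 + Real.sqrt 5) / 2
noncomputable def lucasBeta : ℝ := (1 - Real.sqrt 5) / 2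

lemma sqrt5_sq : Real.sqrt 5 * Real.sqrt 5 = 5 :=
  Real.mul_self_sqrt (by norm_num)

lemma lucas_closed : ∀ k : ℕ, (lucasNum k : ℝ) = lucasAlpha ^ k + lucasBeta ^ k
  | 0 => by norm_num [lucasNum]
  | 1 => by norm_num [lucasNum, lucasAlpha, lucasBeta]
  | (k + 2) => by
      rw [lucasNum]
      push_cast
      rw [lucas_closed (k + 1), lucas_closed k]
      have ha : lucasAlpha ^ 2 = lucasAlpha + 1 := by
        unfold lucasAlpha; rw [pow_two]; field_simp; nlinarith [sqrt5_sq]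
      have hb : lucasBeta ^ 2 = lucasBeta + 1 := by
        unfold lucasBeta; rw [pow_two]; field_simp; nlinarith [sqrt5_sq]
      have : ∀ x : ℝ, x ^ 2 = x + 1 → x ^ (k + 2) = x ^ (k + 1) + x ^ k := by
        intro x hx
        calc x ^ (k + 2) = x ^ k * x ^ 2 := by ring
        _ = x ^ (k + 1) + x ^ k := by rw [hx]; ring
      rw [this _ ha, this _ hb]; ring

lemma lucas_alpha_beta : lucasAlpha * lucasBeta = -1 := by
  unfold lucasAlpha lucasBeta; nlinarith [sqrt5_sq]

lemma lucas_alpha_one_le : 1 ≤ lucasAlpha := by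
  unfold lucasAlpha
  nlinarith [Real.sqrt_nonneg 5, sqrt5_sq]

theorem lucas_even_arctan_series (m : ℕ) (z : ℝ)
    (hz : z > ((1 + Real.sqrt 5) / 2) ^ (2 * m)) :
    HasSum
      (fun n : ℕ => (-1 : ℝ) ^ n / (2 * (n : ℝ) + 1) *
        ((lucasNum (2 * m * (2 * n + 1)) : ℝ) / z ^ (2 * n + 1)))
      (Real.arctan ((lucasNum (2 * m) : ℝ) * z / (z ^ 2 - 1))) := by
  set A : ℝ := lucasAlpha ^ (2 * m) with hA
  have hA1 : 1 ≤ A := one_le_pow₀ lucas_alpha_one_le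
  have hA0 : 0 < A := by linarith
  have hzA : A < z := hz
  have hz1 : 1 < z := lt_of_le_of_lt hA1 hzA
  have hz0 : 0 < z := by linarith
  -- β ^ (2*j) = A⁻¹ powers
  have hbeta_sq : lucasBeta ^ 2 = (lucasAlpha ^ 2)⁻¹ := by
    have h := lucas_alpha_beta
    have ha0 : lucasAlpha ≠ 0 := by nlinarith [lucas_alpha_one_le]
    field_simp
    nlinarith [h]
  have hbeta_pow : ∀ j : ℕ, lucasBeta ^ (2 * m * j) = (A ^ j)⁻¹ := by
    intro j
    calc lucasBeta ^ (2 * m * j) = (lucasBeta ^ 2) ^ (m * j) := by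
          rw [← pow_mul]; congr 1; ring
      _ = ((lucasAlpha ^ 2) ^ (m * j))⁻¹ := by rw [hbeta_sq, inv_pow]
      _ = (A ^ j)⁻¹ := by
          rw [hA, ← pow_mul, ← pow_mul]; congr 2; ring
  have halpha_pow : ∀ j : ℕ, lucasAlpha ^ (2 * m * j) = A ^ j := by
    intro j; rw [hA, ← pow_mul, show 2 * m * j = 2 * m * j by ring]
  -- the two arctan series
  have hx : ‖A / z‖ < 1 := by
    rw [Real.norm_eq_abs, abs_of_pos (div_pos hA0 hz0)]
    rw [div_lt_one hz0]; exact hzA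
  have hy : ‖(A * z)⁻¹‖ < 1 := by
    rw [Real.norm_eq_abs, abs_of_pos (inv_pos.mpr (mul_pos hA0 hz0))]
    rw [inv_lt_one_iff₀]
    right; nlinarith
  have h1 := Real.hasSum_arctan hx
  have h2 := Real.hasSum_arctan hy
  have hsum := h1.add h2
  have hxy : (A / z) * (A * z)⁻¹ < 1 := by
    have : (A / z) * (A * z)⁻¹ = (z ^ 2)⁻¹ := by
      field_simp
    rw [this]
    rw [inv_lt_one_iff₀]; right; nlinarith
  rw [Real.arctan_add hxy] at hsum
  convert hsum using 2 with n
  · have hL : (lucasNum (2 * m * (2 * n + 1)) : ℝ)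
        = A ^ (2 * n + 1) + (A ^ (2 * n + 1))⁻¹ := by
      rw [lucas_closed, halpha_pow, hbeta_pow]
    rw [hL]
    have hzn : z ^ (2 * n + 1) ≠ 0 := pow_ne_zero _ (ne_of_gt hz0)
    have hAn : A ^ (2 * n + 1) ≠ 0 := pow_ne_zero _ (ne_of_gt hA0)
    push_cast
    simp only [div_pow, mul_pow, inv_pow]
    field_simp
  · -- equality of arctan arguments
    have hL2 : (lucasNum (2 * m) : ℝ) = A + A⁻¹ := by
      have hb := hbeta_pow 1
      simp only [mul_one, pow_one] at hb
      rw [lucas_closed, hb, ← hA]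
    rw [hL2]
    have hz2 : z ^ 2 - 1 ≠ 0 := by nlinarith
    have : (A / z) * (A * z)⁻¹ = (z ^ 2)⁻¹ := by field_simp
    rw [this]
    field_simp
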